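/- arXiv:1506.05697 — 2 statements merged into one kernel-verified Lean document; each statement's English description precedes it below -/
import Mathlib

section
/- Assume λ₁ = inf_{u ∈ Σ} Φ(u) is an eigenvalue of L_β. If φ is an eigenfunction of L_β associated with an eigenvalue λ ≠ λ₁, then φ changes sign: both its positive part φ₊ = max{φ,0} and its negative part φ₋ = max{−φ,0} are nonzero on sets of positive Lebesgue measure. -/
open MeasureTheory Filter Topology

noncomputable section

/-- Euclidean space `ℝ^N`. -/
abbrev Vec (N : ℕ) := EuclideanSpace ℝ (Fin N)

/-- The (squared) Gagliardo seminorm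
`[u]² = ∫∫ |u(x)-u(y)|² / |x-y|^(N+2s) dx dy`. -/
def gagliardo (N : ℕ) (s : ℝ) (u : Vec N → ℝ) : ℝ :=
  ∫ p : Vec N × Vec N, (u p.1 - u p.2) ^ 2 / ‖p.1 - p.2‖ ^ ((N : ℝ) + 2 * s)

/-- `u ∈ H^s(ℝ^N)`: `u ∈ L²` and the Gagliardo integrand is integrable. -/
def memHs (N : ℕ) (s : ℝ) (u : Vec N → ℝ) : Prop :=
  MemLp u 2 (volume : Measure (Vec N)) ∧
    Integrable (fun p : Vec N × Vec N =>
      (u p.1 - u p.2) ^ 2 / ‖p.1 - p.2‖ ^ ((N : ℝ) + 2 * s)) volume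

/-- The functional `Φ(u) = [u]² + β ∫ g u²`. -/
def Phi (N : ℕ) (s β : ℝ) (g : Vec N → ℝ) (u : Vec N → ℝ) : ℝ :=
  gagliardo N s u + β * ∫ x : Vec N, g x * u x ^ 2

/-- Assumption (g₁): `g` is bounded measurable with `0 ≤ g ≤ 1`, `g → 1` at infinity,
and `{g < 1}` has positive measure. -/
def g1cond (N : ℕ) (g : Vec N → ℝ) : Prop :=
  Measurable g ∧ (∀ x, 0 ≤ g x ∧ g x ≤ 1) ∧
    Tendsto g (cocompact (Vec N)) (𝓝 1) ∧
    0 < volume {x : Vec N | g x < 1}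

/-- The constraint set `Σ = {u ∈ H^s : ∫ u² = 1}`. -/
def SigmaSet (N : ℕ) (s : ℝ) : Set (Vec N → ℝ) :=
  {u | memHs N s u ∧ ∫ x : Vec N, u x ^ 2 = 1}

/-- Distance induced by the `H^s` norm `‖u‖² = [u]² + β ‖u‖₂²`. -/
def hsDist (N : ℕ) (s β : ℝ) (u v : Vec N → ℝ) : ℝ :=
  Real.sqrt (gagliardo N s (u - v) + β * ∫ x : Vec N, (u x - v x) ^ 2)

/-- Sequential compactness of a set with respect to the `H^s` distance. -/
def IsHsCompact (N : ℕ) (s β : ℝ) (A : Set (Vec N → ℝ)) : Prop :=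
  ∀ f : ℕ → Vec N → ℝ, (∀ n, f n ∈ A) →
    ∃ u ∈ A, ∃ φ : ℕ → ℕ, StrictMono φ ∧
      Tendsto (fun n => hsDist N s β (f (φ n)) u) atTop (𝓝 0)

/-- Continuity on a set `A ⊆ H^s` of a map into `ℝ^m`, with respect to the `H^s` distance. -/
def HsContOn (N : ℕ) (s β : ℝ) {m : ℕ} (A : Set (Vec N → ℝ))
    (h : (Vec N → ℝ) → EuclideanSpace ℝ (Fin m)) : Prop :=
  ∀ u ∈ A, ∀ ε > 0, ∃ δ > 0, ∀ v ∈ A, hsDist N s β u v < δ → dist (h v) (h u) < ε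

/-- The Krasnoselskii genus of `A` is at least `k`: for every `m < k` there is no
continuous odd map `A → ℝ^m \ {0}`. -/
def genusGE (N : ℕ) (s β : ℝ) (A : Set (Vec N → ℝ)) (k : ℕ) : Prop :=
  ∀ m : ℕ, m < k →
    ¬ ∃ h : (Vec N → ℝ) → EuclideanSpace ℝ (Fin m),
      HsContOn N s β A h ∧ (∀ u ∈ A, h (-u) = -h u) ∧ ∀ u ∈ A, h u ≠ 0

/-- The class `Σ_k` of compact symmetric subsets of `Σ` with genus at least `k`. -/
def SigmaK (N : ℕ) (s β : ℝ) (k : ℕ) : Set (Set (Vec N → ℝ)) :=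
  {A | A ⊆ SigmaSet N s ∧ IsHsCompact N s β A ∧ (∀ u ∈ A, -u ∈ A) ∧ genusGE N s β A k}

/-- The minimax levels `λ_k = inf_{A ∈ Σ_k} sup_{u ∈ A} Φ(u)`. -/
def lambdaK (N : ℕ) (s β : ℝ) (g : Vec N → ℝ) (k : ℕ) : ℝ :=
  sInf {c | ∃ A ∈ SigmaK N s β k, c = sSup (Phi N s β g '' A)}

/-- `(lam, u)` is an eigenpair of `L_β = (-Δ)^s + β g`: `u ∈ H^s`, `u ≠ 0`, and the weak
eigenvalue equation holds against every test function `φ ∈ H^s`. -/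
def IsEigenpair (N : ℕ) (s β : ℝ) (g : Vec N → ℝ) (lam : ℝ) (u : Vec N → ℝ) : Prop :=
  memHs N s u ∧ ¬ u =ᵐ[(volume : Measure (Vec N))] 0 ∧
    ∀ φ : Vec N → ℝ, memHs N s φ →
      (∫ p : Vec N × Vec N,
          (u p.1 - u p.2) * (φ p.1 - φ p.2) / ‖p.1 - p.2‖ ^ ((N : ℝ) + 2 * s)) +
        β * ∫ x : Vec N, g x * u x * φ x = lam * ∫ x : Vec N, u x * φ x

/-- The first eigenvalue `λ₁ = inf_{u ∈ Σ} Φ(u)`. -/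
def lambda1 (N : ℕ) (s β : ℝ) (g : Vec N → ℝ) : ℝ :=
  sInf (Phi N s β g '' SigmaSet N s)


/-!
A first eigenfunction `e` does not change sign: `|e|` has the same `L²` norm and no larger
Gagliardo seminorm, so it is a minimiser too, which forces `(|e x| - |e y|)² = (e x - e y)²`,
i.e. `0 ≤ e x * e y`, for almost every `(x, y)`. Eigenfunctions of distinct eigenvalues are
`L²`-orthogonal, so for an eigenfunction `ψ ≥ 0` of `λ ≠ λ₁` we get `e ψ = 0` a.e., and the weak
equation of `e` tested with `ψ` leaves `∫∫ (e x - e y) (ψ x - ψ y) / |x - y|^(N+2s) = 0`. The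
integrand is `-(e x ψ y + e y ψ x) ≤ 0`, so `e x ψ y = 0` for almost every `(x, y)`, and by
Fubini `e = 0` or `ψ = 0` a.e.
-/

section ProductMeasure

variable {α γ : Type*} [MeasurableSpace α] [MeasurableSpace γ] {μ : Measure α} {ν : Measure γ}

theorem ae_prod_fst_and_snd [SFinite μ] {P : α → Prop} (h : ∀ᵐ x ∂μ, P x) :
    ∀ᵐ p ∂μ.prod μ, P p.1 ∧ P p.2 :=
  (Measure.quasiMeasurePreserving_fst.ae h).and (Measure.quasiMeasurePreserving_snd.ae h)

variable [SFinite ν]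

theorem measure_eq_zero_or_of_ae_notMem_prod {s : Set α} {t : Set γ}
    (h : ∀ᵐ p ∂μ.prod ν, p ∉ s ×ˢ t) : μ s = 0 ∨ ν t = 0 := by
  rw [← mul_eq_zero, ← Measure.prod_prod]
  exact measure_mono_null (fun p hp => not_not.mpr hp) (ae_iff.mp h)

theorem ae_eq_zero_or_of_ae_prod_mul_eq_zero {f : α → ℝ} {g : γ → ℝ}
    (h : ∀ᵐ p ∂μ.prod ν, f p.1 * g p.2 = 0) : f =ᵐ[μ] 0 ∨ g =ᵐ[ν] 0 := by
  refine (measure_eq_zero_or_of_ae_notMem_prod (s := {x | f x ≠ 0}) (t := {y | g y ≠ 0}) ?_).imp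
    (fun hf => ae_iff.mpr hf) (fun hg => ae_iff.mpr hg)
  filter_upwards [h] with p hp ⟨hf, hg⟩ using mul_ne_zero hf hg hp

theorem ae_nonneg_or_ae_nonpos_of_ae_prod_mul_self_nonneg [SFinite μ] {f : α → ℝ}
    (h : ∀ᵐ p ∂μ.prod μ, 0 ≤ f p.1 * f p.2) : 0 ≤ᵐ[μ] f ∨ f ≤ᵐ[μ] 0 := by
  refine (measure_eq_zero_or_of_ae_notMem_prod (s := {x | f x < 0}) (t := {x | 0 < f x}) ?_).imp
    (fun hneg => ae_iff.mpr (by simpa using hneg)) (fun hpos => ae_iff.mpr (by simpa using hpos))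
  filter_upwards [h] with p hp ⟨hneg, hpos⟩ using (mul_neg_of_neg_of_pos hneg hpos).not_ge hp

end ProductMeasure

section FractionalSobolev

variable {N : ℕ} {s β : ℝ} {g : Vec N → ℝ}

theorem gagliardo_kernel_pos {x y : Vec N} (h : x ≠ y) : 0 < ‖x - y‖ ^ ((N : ℝ) + 2 * s) :=
  Real.rpow_pos_of_pos (norm_pos_iff.mpr (sub_ne_zero.mpr h)) _

theorem memHs.aemeasurable_comp_fst {u : Vec N → ℝ} (hu : memHs N s u) :
    AEMeasurable (fun p : Vec N × Vec N => u p.1) :=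
  hu.1.1.comp_fst.aemeasurable

theorem memHs.aemeasurable_comp_snd {u : Vec N → ℝ} (hu : memHs N s u) :
    AEMeasurable (fun p : Vec N × Vec N => u p.2) :=
  hu.1.1.comp_snd.aemeasurable

theorem memHs.abs {u : Vec N → ℝ} (hu : memHs N s u) : memHs N s fun x => |u x| := by
  refine ⟨hu.1.abs, hu.2.mono' ?_ (Eventually.of_forall fun p => ?_)⟩
  · exact (((hu.aemeasurable_comp_fst.abs.sub hu.aemeasurable_comp_snd.abs).pow_const 2).div
      (by fun_prop)).aestronglyMeasurable
  · rw [Real.norm_of_nonneg (by positivity)]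
    exact div_le_div_of_nonneg_right (sq_le_sq.mpr (abs_abs_sub_abs_le_abs_sub (u p.1) (u p.2)))
      (by positivity)

theorem memHs.integrable_mul {u v : Vec N → ℝ} (hu : memHs N s u) (hv : memHs N s v) :
    Integrable fun p : Vec N × Vec N =>
      (u p.1 - u p.2) * (v p.1 - v p.2) / ‖p.1 - p.2‖ ^ ((N : ℝ) + 2 * s) := by
  refine ((hu.2.add hv.2).div_const 2).mono' ?_ (Eventually.of_forall fun p => ?_)
  · exact (((hu.aemeasurable_comp_fst.sub hu.aemeasurable_comp_snd).mul
      (hv.aemeasurable_comp_fst.sub hv.aemeasurable_comp_snd)).div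
      (by fun_prop)).aestronglyMeasurable
  · have hK : 0 ≤ ‖p.1 - p.2‖ ^ ((N : ℝ) + 2 * s) := by positivity
    have hab := two_mul_le_add_sq |u p.1 - u p.2| |v p.1 - v p.2|
    rw [sq_abs, sq_abs, mul_assoc, ← abs_mul] at hab
    simp only [Pi.add_apply, Real.norm_eq_abs, abs_div, abs_of_nonneg hK]
    rw [← add_div, div_right_comm]
    gcongr
    linarith

theorem memHs.const_mul {u : Vec N → ℝ} (hu : memHs N s u) (c : ℝ) :
    memHs N s fun x => c * u x := by
  refine ⟨hu.1.const_mul c, (hu.2.const_mul (c ^ 2)).congr (Eventually.of_forall fun p => ?_)⟩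
  simp only
  ring

theorem Phi_const_mul (u : Vec N → ℝ) (c : ℝ) :
    Phi N s β g (fun x => c * u x) = c ^ 2 * Phi N s β g u := by
  simp only [Phi, gagliardo, ← mul_sub, mul_pow, mul_div_assoc, mul_left_comm (g _),
    integral_const_mul]
  ring

theorem Phi_nonneg (hβ : 0 ≤ β) (hg : ∀ x, 0 ≤ g x) (u : Vec N → ℝ) : 0 ≤ Phi N s β g u :=
  add_nonneg (integral_nonneg fun _ => by positivity)
    (mul_nonneg hβ (integral_nonneg fun x => mul_nonneg (hg x) (sq_nonneg _)))

theorem lambda1_mul_integral_sq_le_Phi (hβ : 0 ≤ β) (hg : ∀ x, 0 ≤ g x) {u : Vec N → ℝ}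
    (hu : memHs N s u) : lambda1 N s β g * ∫ x, u x ^ 2 ≤ Phi N s β g u := by
  set t := ∫ x, u x ^ 2
  rcases (integral_nonneg fun x => sq_nonneg (u x) : 0 ≤ t).eq_or_lt with ht | ht
  · rw [show t = 0 from ht.symm, mul_zero]
    exact Phi_nonneg hβ hg u
  set c := (Real.sqrt t)⁻¹
  have hc : c ^ 2 * t = 1 := by rw [inv_pow, Real.sq_sqrt ht.le, inv_mul_cancel₀ ht.ne']
  have hmem : (fun x => c * u x) ∈ SigmaSet N s := by
    refine ⟨hu.const_mul c, ?_⟩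
    simp only [mul_pow]
    rw [integral_const_mul, hc]
  have hle : lambda1 N s β g ≤ c ^ 2 * Phi N s β g u := by
    rw [← Phi_const_mul]
    exact csInf_le ⟨0, by rintro _ ⟨v, -, rfl⟩; exact Phi_nonneg hβ hg v⟩ ⟨_, hmem, rfl⟩
  calc lambda1 N s β g * t ≤ c ^ 2 * Phi N s β g u * t := by gcongr
    _ = Phi N s β g u := by rw [mul_right_comm, hc, one_mul]

theorem IsEigenpair.neg {lam : ℝ} {u : Vec N → ℝ} (h : IsEigenpair N s β g lam u) :
    IsEigenpair N s β g lam (-u) := by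
  obtain ⟨hu, hne, heq⟩ := h
  refine ⟨⟨hu.1.neg, hu.2.congr (Eventually.of_forall fun p => ?_)⟩, fun h0 => hne ?_,
    fun φ hφ => ?_⟩
  · simp only [Pi.neg_apply]
    ring
  · filter_upwards [h0] with x hx
    simpa using hx
  · simp only [Pi.neg_apply, ← neg_sub', neg_mul, mul_neg, neg_div, integral_neg]
    linarith [heq φ hφ]

theorem IsEigenpair.Phi_eq {lam : ℝ} {u : Vec N → ℝ} (h : IsEigenpair N s β g lam u) :
    Phi N s β g u = lam * ∫ x, u x ^ 2 := by
  simpa only [Phi, gagliardo, sq, mul_assoc] using h.2.2 u h.1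

theorem IsEigenpair.integral_mul_eq_zero {lam mu : ℝ} {u v : Vec N → ℝ}
    (hu : IsEigenpair N s β g lam u) (hv : IsEigenpair N s β g mu v) (hne : lam ≠ mu) :
    ∫ x, u x * v x = 0 := by
  have huv := hu.2.2 v hv.1
  have hvu := hv.2.2 u hu.1
  simp only [mul_comm (v _ - v _), mul_right_comm (g _) (v _), mul_comm (v _) (u _)] at hvu
  have : (lam - mu) * ∫ x, u x * v x = 0 := by linarith
  exact (mul_eq_zero.mp this).resolve_left (sub_ne_zero.mpr hne)

theorem IsEigenpair.ae_prod_mul_nonneg_of_lambda1 (hβ : 0 ≤ β) (hg : ∀ x, 0 ≤ g x)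
    {e : Vec N → ℝ} (he : IsEigenpair N s β g (lambda1 N s β g) e) :
    ∀ᵐ p : Vec N × Vec N, 0 ≤ e p.1 * e p.2 := by
  have habs := he.1.abs
  have hle : ∀ p : Vec N × Vec N,
      (|e p.1| - |e p.2|) ^ 2 / ‖p.1 - p.2‖ ^ ((N : ℝ) + 2 * s)
        ≤ (e p.1 - e p.2) ^ 2 / ‖p.1 - p.2‖ ^ ((N : ℝ) + 2 * s) := fun p =>
    div_le_div_of_nonneg_right (sq_le_sq.mpr (abs_abs_sub_abs_le_abs_sub (e p.1) (e p.2)))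
      (by positivity)
  have hge : gagliardo N s e ≤ gagliardo N s fun x => |e x| := by
    have := lambda1_mul_integral_sq_le_Phi hβ hg habs
    simp only [sq_abs, ← he.Phi_eq, Phi] at this
    linarith
  have hae := (integral_eq_iff_of_ae_le habs.2 he.1.2 (Eventually.of_forall hle)).mp
    (le_antisymm (integral_mono habs.2 he.1.2 hle) hge)
  filter_upwards [hae] with p hp
  rcases eq_or_ne p.1 p.2 with hdiag | hdiag
  · rw [hdiag]
    exact mul_self_nonneg _
  · have := (div_left_inj' (gagliardo_kernel_pos (s := s) hdiag).ne').mp hp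
    nlinarith [sq_abs (e p.1), sq_abs (e p.2), abs_mul (e p.1) (e p.2), abs_nonneg (e p.1 * e p.2)]

theorem exists_ae_nonneg_eigenfunction_lambda1 (hβ : 0 ≤ β) (hg : ∀ x, 0 ≤ g x)
    (h1 : ∃ e : Vec N → ℝ, IsEigenpair N s β g (lambda1 N s β g) e) :
    ∃ e : Vec N → ℝ, IsEigenpair N s β g (lambda1 N s β g) e ∧ 0 ≤ᵐ[volume] e := by
  obtain ⟨e, he⟩ := h1
  rcases ae_nonneg_or_ae_nonpos_of_ae_prod_mul_self_nonneg
    (he.ae_prod_mul_nonneg_of_lambda1 hβ hg) with h | h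
  · exact ⟨e, he, h⟩
  · exact ⟨-e, he.neg, by filter_upwards [h] with x hx using neg_nonneg.mpr hx⟩

theorem ae_eq_zero_or_of_disjoint_nonneg_of_cross_integral_eq_zero {e ψ : Vec N → ℝ}
    (he : memHs N s e) (hψ : memHs N s ψ) (hdisj : ∀ᵐ x, 0 ≤ e x ∧ 0 ≤ ψ x ∧ e x * ψ x = 0)
    (hcross : ∫ p : Vec N × Vec N,
      (e p.1 - e p.2) * (ψ p.1 - ψ p.2) / ‖p.1 - p.2‖ ^ ((N : ℝ) + 2 * s) = 0) :
    e =ᵐ[volume] 0 ∨ ψ =ᵐ[volume] 0 := by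
  have hpair := ae_prod_fst_and_snd hdisj
  have hnonpos : ∀ᵐ p : Vec N × Vec N,
      (e p.1 - e p.2) * (ψ p.1 - ψ p.2) / ‖p.1 - p.2‖ ^ ((N : ℝ) + 2 * s) ≤ 0 := by
    filter_upwards [hpair] with p ⟨⟨he1, hψ1, h1⟩, he2, hψ2, h2⟩
    refine div_nonpos_of_nonpos_of_nonneg ?_ (by positivity)
    nlinarith [mul_nonneg he1 hψ2, mul_nonneg he2 hψ1]
  have hzero := (integral_eq_iff_of_ae_le (he.integrable_mul hψ) (integrable_zero _ _ _)
    hnonpos).mp (by simp [hcross])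
  refine ae_eq_zero_or_of_ae_prod_mul_eq_zero (f := e) (g := ψ) ?_
  filter_upwards [hzero, hpair] with p hp ⟨⟨he1, hψ1, h1⟩, he2, hψ2, h2⟩
  rcases eq_or_ne p.1 p.2 with hdiag | hdiag
  · rwa [← hdiag]
  · have := (div_eq_zero_iff.mp hp).resolve_right (gagliardo_kernel_pos hdiag).ne'
    nlinarith [mul_nonneg he1 hψ2, mul_nonneg he2 hψ1]

theorem IsEigenpair.not_ae_nonneg_of_lambda1 {e ψ : Vec N → ℝ} {lam : ℝ}
    (he : IsEigenpair N s β g (lambda1 N s β g) e) (he0 : 0 ≤ᵐ[volume] e)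
    (hψ : IsEigenpair N s β g lam ψ) (hlam : lam ≠ lambda1 N s β g) :
    ¬ 0 ≤ᵐ[volume] ψ := by
  intro hψ0
  have horth := he.integral_mul_eq_zero hψ hlam.symm
  have hprod_nonneg : 0 ≤ᵐ[volume] e * ψ := by
    filter_upwards [he0, hψ0] with x h1 h2 using mul_nonneg h1 h2
  have hprod_zero : ∀ᵐ x, e x * ψ x = 0 :=
    (integral_eq_zero_iff_of_nonneg_ae hprod_nonneg (he.1.1.integrable_mul hψ.1.1)).mp horth
  have hweighted : ∫ x, g x * e x * ψ x = 0 := integral_eq_zero_of_ae <| by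
    filter_upwards [hprod_zero] with x hx
    simp [mul_assoc, hx]
  have hcross := he.2.2 ψ hψ.1
  rw [hweighted, horth, mul_zero, mul_zero, add_zero] at hcross
  have hdisj : ∀ᵐ x, 0 ≤ e x ∧ 0 ≤ ψ x ∧ e x * ψ x = 0 := by
    filter_upwards [he0, hψ0, hprod_zero] with x h1 h2 h3 using ⟨h1, h2, h3⟩
  rcases ae_eq_zero_or_of_disjoint_nonneg_of_cross_integral_eq_zero he.1 hψ.1 hdisj hcross
    with h | h
  · exact he.2.1 h
  · exact hψ.2.1 h

end FractionalSobolev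

theorem higher_eigenfunctions_sign_changing_general (N : ℕ) (s β : ℝ)
    (hβ : 0 < β) (g : Vec N → ℝ) (hg : g1cond N g)
    (h1 : ∃ e : Vec N → ℝ, IsEigenpair N s β g (lambda1 N s β g) e)
    (lam : ℝ) (φ : Vec N → ℝ) (hlam : lam ≠ lambda1 N s β g)
    (hφ : IsEigenpair N s β g lam φ) :
    0 < volume {x : Vec N | max (φ x) 0 ≠ 0} ∧
      0 < volume {x : Vec N | max (-φ x) 0 ≠ 0} := by
  obtain ⟨e, he, he0⟩ := exists_ae_nonneg_eigenfunction_lambda1 hβ.le (fun x => (hg.2.1 x).1) h1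
  have hpos : ∀ ψ, IsEigenpair N s β g lam ψ → 0 < volume {x : Vec N | max (ψ x) 0 ≠ 0} := by
    intro ψ hψ
    refine pos_iff_ne_zero.mpr fun hnull => he.not_ae_nonneg_of_lambda1 he0 hψ.neg hlam ?_
    filter_upwards [measure_eq_zero_iff_ae_notMem.mp hnull] with x hx
    simpa using hx
  exact ⟨hpos φ hφ, hpos (-φ) hφ.neg⟩

/-- eigenfunctions associated with eigenvalues `λ ≠ λ₁` change sign:
both the positive part and the negative part are nonzero on sets of positive measure. -/
theorem higher_eigenfunctions_sign_changing (N : ℕ) (s β : ℝ) (hs : s ∈ Set.Ioo (0 : ℝ) 1)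
    (hN : 2 * s < N) (hβ : 0 < β) (g : Vec N → ℝ) (hg : g1cond N g)
    (h1 : ∃ e : Vec N → ℝ, IsEigenpair N s β g (lambda1 N s β g) e)
    (lam : ℝ) (φ : Vec N → ℝ) (hlam : lam ≠ lambda1 N s β g)
    (hφ : IsEigenpair N s β g lam φ) :
    0 < volume {x : Vec N | max (φ x) 0 ≠ 0} ∧
      0 < volume {x : Vec N | max (-φ x) 0 ≠ 0} :=
  higher_eigenfunctions_sign_changing_general N s β hβ g hg h1 lam φ hlam hφ
end
end

section
/- Let (λ₂, u) be an eigenpair of L_β with u sign-changing, u = u₊ − u₋, u₊ ≠ 0 ≠ u₋, and ∫ u₊ u₋ dx = 0. Define h : [0,1] → Σ by h(t) = (u₊ cos(πt) + u₋ sin(πt)) / ‖u₊ cos(πt) + u₋ sin(πt)‖_{L²}. Then Φ(h(t)) ≤ λ₂ for every t ∈ [0,1]. -/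
open MeasureTheory Filter Topology

noncomputable section

/-!
Write `E` for the bilinear form of the Gagliardo seminorm. Testing the eigenvalue equation with
`u⁺` and with `u⁻` gives `Φ(u±) = λ ‖u±‖₂² + E(u⁺, u⁻)`, and `E(u⁺, u⁻) ≤ 0` because `u⁺` and `u⁻`
have disjoint supports. Since `u⁺ u⁻ = 0` pointwise, `Φ` expands on `a u⁺ + b u⁻` as
`a² Φ(u⁺) + 2ab E(u⁺, u⁻) + b² Φ(u⁻) = λ ‖a u⁺ + b u⁻‖₂² + (a + b)² E(u⁺, u⁻)`,
which is at most `λ ‖a u⁺ + b u⁻‖₂²`. Normalising costs nothing, as `Φ` is 2-homogeneous.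
-/

section PosNegParts

variable {α : Type*} (u : α → ℝ) (x : α)

lemma posPart_apply_mul_negPart_apply : u⁺ x * u⁻ x = 0 := by
  show max (u x) 0 * max (-u x) 0 = 0
  rcases le_total (u x) 0 with h | h <;> simp [h]

lemma mul_posPart_apply : u x * u⁺ x = u⁺ x ^ 2 := by
  show u x * max (u x) 0 = max (u x) 0 ^ 2
  rcases le_total (u x) 0 with h | h <;> simp [h, sq]

lemma mul_negPart_apply : u x * u⁻ x = -(u⁻ x ^ 2) := by
  show u x * max (-u x) 0 = -(max (-u x) 0 ^ 2)
  rcases le_total (u x) 0 with h | h <;> simp [h, sq]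

lemma abs_posPart_apply_le : |u⁺ x| ≤ |u x| := by
  show |max (u x) 0| ≤ |u x|
  rcases le_total (u x) 0 with h | h <;> simp [h]

lemma abs_negPart_apply_le : |u⁻ x| ≤ |u x| := by
  show |max (-u x) 0| ≤ |u x|
  rcases le_total (u x) 0 with h | h <;> simp [h]

lemma abs_posPart_apply_sub_le (y : α) : |u⁺ x - u⁺ y| ≤ |u x - u y| :=
  abs_max_sub_max_le_abs _ _ _

lemma abs_negPart_apply_sub_le (y : α) : |u⁻ x - u⁻ y| ≤ |u x - u y| := by
  have h := abs_max_sub_max_le_abs (-u x) (-u y) 0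
  rwa [neg_sub_neg, abs_sub_comm (u y)] at h

end PosNegParts

section DisjointSupports

variable {α : Type*} [MeasurableSpace α] {μ : Measure α} {f₁ f₂ : α → ℝ}

lemma integral_mul_mul_add_mul_sq_of_mul_eq_zero {w : α → ℝ}
    (h₁ : Integrable (fun x => w x * f₁ x ^ 2) μ) (h₂ : Integrable (fun x => w x * f₂ x ^ 2) μ)
    (hdisj : ∀ x, f₁ x * f₂ x = 0) (a b : ℝ) :
    ∫ x, w x * (f₁ x * a + f₂ x * b) ^ 2 ∂μ =
      a ^ 2 * ∫ x, w x * f₁ x ^ 2 ∂μ + b ^ 2 * ∫ x, w x * f₂ x ^ 2 ∂μ := by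
  rw [← integral_const_mul, ← integral_const_mul,
    ← integral_add (h₁.const_mul _) (h₂.const_mul _)]
  congr 1 with x
  linear_combination (2 * a * b * w x) * hdisj x

lemma integral_mul_add_mul_sq_of_mul_eq_zero (h₁ : MemLp f₁ 2 μ) (h₂ : MemLp f₂ 2 μ)
    (hdisj : ∀ x, f₁ x * f₂ x = 0) (a b : ℝ) :
    ∫ x, (f₁ x * a + f₂ x * b) ^ 2 ∂μ = a ^ 2 * ∫ x, f₁ x ^ 2 ∂μ + b ^ 2 * ∫ x, f₂ x ^ 2 ∂μ := by
  simpa using integral_mul_mul_add_mul_sq_of_mul_eq_zero (w := fun _ => 1)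
    (by simpa using h₁.integrable_sq) (by simpa using h₂.integrable_sq) hdisj a b

lemma MemLp.integral_sq_pos (hf : MemLp f₁ 2 μ) (hf₀ : ¬ f₁ =ᵐ[μ] 0) : 0 < ∫ x, f₁ x ^ 2 ∂μ := by
  refine (integral_nonneg fun x => sq_nonneg (f₁ x)).lt_of_ne fun h => hf₀ ?_
  filter_upwards [(integral_eq_zero_iff_of_nonneg (fun x => sq_nonneg (f₁ x))
    hf.integrable_sq).1 h.symm] with x hx
  simpa using hx

end DisjointSupports

section Gagliardo

variable {N : ℕ} {s : ℝ}

def gagliardoIntegrand (N : ℕ) (s : ℝ) (f₁ f₂ : Vec N → ℝ) (p : Vec N × Vec N) : ℝ :=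
  (f₁ p.1 - f₁ p.2) * (f₂ p.1 - f₂ p.2) / ‖p.1 - p.2‖ ^ ((N : ℝ) + 2 * s)

def gagliardoForm (N : ℕ) (s : ℝ) (f₁ f₂ : Vec N → ℝ) : ℝ :=
  ∫ p, gagliardoIntegrand N s f₁ f₂ p

lemma gagliardo_eq_gagliardoForm (f : Vec N → ℝ) : gagliardo N s f = gagliardoForm N s f f := by
  simp only [gagliardo, gagliardoForm, gagliardoIntegrand, sq]

lemma memHs_iff {f : Vec N → ℝ} :
    memHs N s f ↔ MemLp f 2 volume ∧ Integrable (gagliardoIntegrand N s f f) := by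
  simp only [memHs, sq]
  rfl

lemma gagliardoForm_comm (f₁ f₂ : Vec N → ℝ) :
    gagliardoForm N s f₁ f₂ = gagliardoForm N s f₂ f₁ := by
  unfold gagliardoForm gagliardoIntegrand
  congr 1 with p
  ring

lemma gagliardoForm_sub_left {f₁ f₂ h : Vec N → ℝ}
    (h₁ : Integrable (gagliardoIntegrand N s f₁ h)) (h₂ : Integrable (gagliardoIntegrand N s f₂ h)) :
    gagliardoForm N s (f₁ - f₂) h = gagliardoForm N s f₁ h - gagliardoForm N s f₂ h := by
  rw [gagliardoForm, gagliardoForm, gagliardoForm, ← integral_sub h₁ h₂]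
  congr 1 with p
  simp only [gagliardoIntegrand, Pi.sub_apply]
  ring

lemma gagliardoIntegrand_self_nonneg (f : Vec N → ℝ) (p : Vec N × Vec N) :
    0 ≤ gagliardoIntegrand N s f f p :=
  div_nonneg (mul_self_nonneg _) (Real.rpow_nonneg (norm_nonneg _) _)

lemma aestronglyMeasurable_gagliardoIntegrand {f₁ f₂ : Vec N → ℝ}
    (h₁ : AEStronglyMeasurable f₁ volume) (h₂ : AEStronglyMeasurable f₂ volume) :
    AEStronglyMeasurable (gagliardoIntegrand N s f₁ f₂) volume := by
  have increment : ∀ f : Vec N → ℝ, AEStronglyMeasurable f volume →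
      AEMeasurable (fun p : Vec N × Vec N => f p.1 - f p.2) volume := fun f hf =>
    ((hf.comp_quasiMeasurePreserving Measure.quasiMeasurePreserving_fst).sub
      (hf.comp_quasiMeasurePreserving Measure.quasiMeasurePreserving_snd)).aemeasurable
  have kernel : Measurable fun p : Vec N × Vec N => ‖p.1 - p.2‖ ^ ((N : ℝ) + 2 * s) := by
    fun_prop
  exact (((increment f₁ h₁).mul (increment f₂ h₂)).div kernel.aemeasurable).aestronglyMeasurable

lemma memHs.integrable_gagliardoIntegrand {f₁ f₂ : Vec N → ℝ}
    (h₁ : memHs N s f₁) (h₂ : memHs N s f₂) : Integrable (gagliardoIntegrand N s f₁ f₂) := by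
  rw [memHs_iff] at h₁ h₂
  refine (h₁.2.add h₂.2).mono
    (aestronglyMeasurable_gagliardoIntegrand h₁.1.1 h₂.1.1) (ae_of_all _ fun p => ?_)
  have hK := Real.rpow_nonneg (norm_nonneg (p.1 - p.2)) ((N : ℝ) + 2 * s)
  set a := f₁ p.1 - f₁ p.2
  set b := f₂ p.1 - f₂ p.2
  have hab : |a * b| ≤ a * a + b * b := by
    rw [abs_mul]
    nlinarith [abs_mul_abs_self a, abs_mul_abs_self b, sq_nonneg (|a| - |b|)]
  change |gagliardoIntegrand N s f₁ f₂ p| ≤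
    ‖gagliardoIntegrand N s f₁ f₁ p + gagliardoIntegrand N s f₂ f₂ p‖
  rw [Real.norm_of_nonneg (add_nonneg (gagliardoIntegrand_self_nonneg f₁ p)
    (gagliardoIntegrand_self_nonneg f₂ p))]
  simp only [gagliardoIntegrand, abs_div, abs_of_nonneg hK, ← add_div]
  exact div_le_div_of_nonneg_right hab hK

lemma memHs.of_abs_sub_le {u f : Vec N → ℝ} (hu : memHs N s u) (hf : AEStronglyMeasurable f volume)
    (hf_le : ∀ x, |f x| ≤ |u x|) (hf_sub_le : ∀ x y, |f x - f y| ≤ |u x - u y|) :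
    memHs N s f := by
  rw [memHs_iff] at hu ⊢
  refine ⟨hu.1.of_le hf (ae_of_all _ fun x => by simpa only [Real.norm_eq_abs] using hf_le x),
    hu.2.mono (aestronglyMeasurable_gagliardoIntegrand hf hf) (ae_of_all _ fun p => ?_)⟩
  rw [Real.norm_of_nonneg (gagliardoIntegrand_self_nonneg f p),
    Real.norm_of_nonneg (gagliardoIntegrand_self_nonneg u p)]
  have h := mul_self_le_mul_self (abs_nonneg _) (hf_sub_le p.1 p.2)
  rw [abs_mul_abs_self, abs_mul_abs_self] at h
  exact div_le_div_of_nonneg_right h (Real.rpow_nonneg (norm_nonneg _) _)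

lemma memHs.posPart {u : Vec N → ℝ} (hu : memHs N s u) : memHs N s u⁺ :=
  hu.of_abs_sub_le hu.1.pos_part.1
    (abs_posPart_apply_le u)
    (abs_posPart_apply_sub_le u)

lemma memHs.negPart {u : Vec N → ℝ} (hu : memHs N s u) : memHs N s u⁻ :=
  hu.of_abs_sub_le hu.1.neg_part.1
    (abs_negPart_apply_le u)
    (abs_negPart_apply_sub_le u)

/-- Disjoint supports make the numerator `-u⁺(x) u⁻(y) - u⁺(y) u⁻(x)`. -/
lemma gagliardoForm_posPart_negPart_nonpos (u : Vec N → ℝ) :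
    gagliardoForm N s u⁺ u⁻ ≤ 0 := by
  refine integral_nonpos fun p => div_nonpos_of_nonpos_of_nonneg ?_
    (Real.rpow_nonneg (norm_nonneg _) _)
  have hx := posPart_apply_mul_negPart_apply u p.1
  have hy := posPart_apply_mul_negPart_apply u p.2
  change max (u p.1) 0 * max (-u p.1) 0 = 0 at hx
  change max (u p.2) 0 * max (-u p.2) 0 = 0 at hy
  change (max (u p.1) 0 - max (u p.2) 0) * (max (-u p.1) 0 - max (-u p.2) 0) ≤ 0
  nlinarith [mul_nonneg (le_max_right (u p.1) 0) (le_max_right (-u p.2) 0),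
    mul_nonneg (le_max_right (u p.2) 0) (le_max_right (-u p.1) 0)]

lemma memHs.gagliardoForm_eq_posPart_sub_negPart {u φ : Vec N → ℝ} (hu : memHs N s u)
    (hφ : memHs N s φ) :
    gagliardoForm N s u φ = gagliardoForm N s u⁺ φ - gagliardoForm N s u⁻ φ := by
  rw [← gagliardoForm_sub_left (hu.posPart.integrable_gagliardoIntegrand hφ)
    (hu.negPart.integrable_gagliardoIntegrand hφ), posPart_sub_negPart]

end Gagliardo

section PhiExpansion

variable {N : ℕ} {s β : ℝ} {g : Vec N → ℝ}

lemma Phi_mul_add_mul_of_mul_eq_zero {C : ℝ} {f₁ f₂ : Vec N → ℝ} (h₁ : memHs N s f₁) (h₂ : memHs N s f₂)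
    (hg : AEStronglyMeasurable g volume) (hgC : ∀ x, ‖g x‖ ≤ C) (hdisj : ∀ x, f₁ x * f₂ x = 0)
    (a b : ℝ) :
    Phi N s β g (fun x => f₁ x * a + f₂ x * b) =
      a ^ 2 * Phi N s β g f₁ + 2 * a * b * gagliardoForm N s f₁ f₂ + b ^ 2 * Phi N s β g f₂ := by
  have h₁₁ := h₁.integrable_gagliardoIntegrand h₁
  have h₁₂ := h₁.integrable_gagliardoIntegrand h₂
  have h₂₂ := h₂.integrable_gagliardoIntegrand h₂
  have gag : gagliardo N s (fun x => f₁ x * a + f₂ x * b) =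
      a ^ 2 * gagliardoForm N s f₁ f₁ + 2 * a * b * gagliardoForm N s f₁ f₂ +
        b ^ 2 * gagliardoForm N s f₂ f₂ := by
    calc gagliardo N s (fun x => f₁ x * a + f₂ x * b)
        = ∫ p, (a ^ 2 * gagliardoIntegrand N s f₁ f₁ p +
            2 * a * b * gagliardoIntegrand N s f₁ f₂ p) +
              b ^ 2 * gagliardoIntegrand N s f₂ f₂ p := by
          unfold gagliardo gagliardoIntegrand
          congr 1 with p
          ring
      _ = _ := by
          have hsum : Integrable fun p => a ^ 2 * gagliardoIntegrand N s f₁ f₁ p +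
              2 * a * b * gagliardoIntegrand N s f₁ f₂ p :=
            (h₁₁.const_mul _).add (h₁₂.const_mul _)
          rw [integral_add hsum (h₂₂.const_mul _),
            integral_add (h₁₁.const_mul _) (h₁₂.const_mul _), integral_const_mul,
            integral_const_mul, integral_const_mul]
          rfl
  have pot := integral_mul_mul_add_mul_sq_of_mul_eq_zero
    (h₁.1.integrable_sq.bdd_mul hg (ae_of_all _ hgC))
    (h₂.1.integrable_sq.bdd_mul hg (ae_of_all _ hgC)) hdisj a b
  rw [Phi, Phi, Phi, gag, pot, gagliardo_eq_gagliardoForm, gagliardo_eq_gagliardoForm]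
  ring

lemma Phi_div_const (f : Vec N → ℝ) (r : ℝ) :
    Phi N s β g (fun x => f x / r) = Phi N s β g f / r ^ 2 := by
  have gag : gagliardo N s (fun x => f x / r) = gagliardo N s f / r ^ 2 := by
    rw [gagliardo, gagliardo, ← integral_div]
    congr 1 with p
    rw [div_sub_div_same, div_pow, div_right_comm]
  have pot : ∫ x, g x * (f x / r) ^ 2 = (∫ x, g x * f x ^ 2) / r ^ 2 := by
    rw [← integral_div]
    congr 1 with x
    rw [div_pow, mul_div_assoc]
  rw [Phi, Phi, gag, pot]
  ring

lemma Phi_div_sqrt_integral_sq_le {f : Vec N → ℝ} {lam : ℝ} (hpos : 0 < ∫ x, f x ^ 2)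
    (hf : Phi N s β g f ≤ lam * ∫ x, f x ^ 2) :
    Phi N s β g (fun x => f x / Real.sqrt (∫ y, f y ^ 2)) ≤ lam := by
  rwa [Phi_div_const, Real.sq_sqrt hpos.le, div_le_iff₀ hpos]

end PhiExpansion

namespace IsEigenpair

variable {N : ℕ} {s β lam : ℝ} {g u : Vec N → ℝ}

lemma weak_eq (h : IsEigenpair N s β g lam u) {φ : Vec N → ℝ} (hφ : memHs N s φ) :
    gagliardoForm N s u φ + β * ∫ x, g x * u x * φ x = lam * ∫ x, u x * φ x :=
  h.2.2 φ hφ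

lemma Phi_posPart (h : IsEigenpair N s β g lam u) :
    Phi N s β g u⁺ = lam * (∫ x, u⁺ x ^ 2) + gagliardoForm N s u⁺ u⁻ := by
  have key := h.weak_eq h.1.posPart
  simp_rw [mul_assoc, mul_posPart_apply] at key
  rw [h.1.gagliardoForm_eq_posPart_sub_negPart h.1.posPart, gagliardoForm_comm u⁻] at key
  rw [Phi, gagliardo_eq_gagliardoForm]
  linarith

lemma Phi_negPart (h : IsEigenpair N s β g lam u) :
    Phi N s β g u⁻ = lam * (∫ x, u⁻ x ^ 2) + gagliardoForm N s u⁺ u⁻ := by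
  have key := h.weak_eq h.1.negPart
  simp_rw [mul_assoc, mul_negPart_apply, mul_neg, integral_neg] at key
  rw [h.1.gagliardoForm_eq_posPart_sub_negPart h.1.negPart] at key
  rw [Phi, gagliardo_eq_gagliardoForm]
  linarith

lemma Phi_posPart_mul_add_negPart_mul_le {C : ℝ} (h : IsEigenpair N s β g lam u) (hg : AEStronglyMeasurable g volume)
    (hgC : ∀ x, ‖g x‖ ≤ C) (a b : ℝ) :
    Phi N s β g (fun x => u⁺ x * a + u⁻ x * b) ≤ lam * ∫ x, (u⁺ x * a + u⁻ x * b) ^ 2 := by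
  rw [Phi_mul_add_mul_of_mul_eq_zero h.1.posPart h.1.negPart hg hgC
      (posPart_apply_mul_negPart_apply u) a b,
    integral_mul_add_mul_sq_of_mul_eq_zero h.1.posPart.1 h.1.negPart.1
      (posPart_apply_mul_negPart_apply u) a b,
    h.Phi_posPart, h.Phi_negPart]
  nlinarith [mul_nonpos_of_nonneg_of_nonpos (sq_nonneg (a + b))
    (gagliardoForm_posPart_negPart_nonpos (s := s) u)]

end IsEigenpair

theorem path_Phi_le_lambda2_general (N : ℕ) (s β : ℝ)
    (g : Vec N → ℝ) (hgm : Measurable g)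
    (hgb : ∀ x, 0 ≤ g x ∧ g x ≤ 1) (u : Vec N → ℝ)
    (h : IsEigenpair N s β g (lambdaK N s β g 2) u)
    (hplus : ¬ (fun x => max (u x) 0) =ᵐ[(volume : Measure (Vec N))] 0)
    (hminus : ¬ (fun x => max (-u x) 0) =ᵐ[(volume : Measure (Vec N))] 0) :
    ∀ t ∈ Set.Icc (0 : ℝ) 1,
      Phi N s β g (fun x =>
        (max (u x) 0 * Real.cos (Real.pi * t) + max (-u x) 0 * Real.sin (Real.pi * t)) /
          Real.sqrt (∫ y : Vec N,
            (max (u y) 0 * Real.cos (Real.pi * t) +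
              max (-u y) 0 * Real.sin (Real.pi * t)) ^ 2)) ≤ lambdaK N s β g 2 := by
  intro t _
  have hgC : ∀ x, ‖g x‖ ≤ 1 := fun x => by
    rw [Real.norm_of_nonneg (hgb x).1]; exact (hgb x).2
  have hP : 0 < ∫ x, u⁺ x ^ 2 := MemLp.integral_sq_pos h.1.posPart.1 hplus
  have hM : 0 < ∫ x, u⁻ x ^ 2 := MemLp.integral_sq_pos h.1.negPart.1 hminus
  refine Phi_div_sqrt_integral_sq_le (f := fun x => u⁺ x * _ + u⁻ x * _) ?_
    (h.Phi_posPart_mul_add_negPart_mul_le hgm.aestronglyMeasurable hgC _ _)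
  rw [integral_mul_add_mul_sq_of_mul_eq_zero h.1.posPart.1 h.1.negPart.1
    (posPart_apply_mul_negPart_apply u)]
  set P := ∫ x, u⁺ x ^ 2
  set M := ∫ x, u⁻ x ^ 2
  nlinarith [Real.cos_sq_add_sin_sq (Real.pi * t), lt_min hP hM,
    mul_le_mul_of_nonneg_left (min_le_left P M) (sq_nonneg (Real.cos (Real.pi * t))),
    mul_le_mul_of_nonneg_left (min_le_right P M) (sq_nonneg (Real.sin (Real.pi * t)))]

/-- for a sign-changing eigenfunction `u` associated with `λ₂`, the path
`h(t) = (u₊ cos(πt) + u₋ sin(πt)) / ‖u₊ cos(πt) + u₋ sin(πt)‖₂` satisfies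
`Φ(h(t)) ≤ λ₂` for every `t ∈ [0,1]`. -/
theorem path_Phi_le_lambda2 (N : ℕ) (s β : ℝ) (hs : s ∈ Set.Ioo (0 : ℝ) 1)
    (hN : 2 * s < N) (hβ : 0 < β) (g : Vec N → ℝ) (hgm : Measurable g)
    (hgb : ∀ x, 0 ≤ g x ∧ g x ≤ 1) (u : Vec N → ℝ)
    (h : IsEigenpair N s β g (lambdaK N s β g 2) u)
    (hplus : ¬ (fun x => max (u x) 0) =ᵐ[(volume : Measure (Vec N))] 0)
    (hminus : ¬ (fun x => max (-u x) 0) =ᵐ[(volume : Measure (Vec N))] 0)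
    (horth : ∫ x : Vec N, max (u x) 0 * max (-u x) 0 = 0) :
    ∀ t ∈ Set.Icc (0 : ℝ) 1,
      Phi N s β g (fun x =>
        (max (u x) 0 * Real.cos (Real.pi * t) + max (-u x) 0 * Real.sin (Real.pi * t)) /
          Real.sqrt (∫ y : Vec N,
            (max (u y) 0 * Real.cos (Real.pi * t) +
              max (-u y) 0 * Real.sin (Real.pi * t)) ^ 2)) ≤ lambdaK N s β g 2 :=
  path_Phi_le_lambda2_general N s β g hgm hgb u h hplus hminus
end
end
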